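/- Verification, cost identity: Suppose (H0)–(H5) hold and (Y,V) is a solution of the equilibrium HJB equation. Define the feedback law ū(t,x) = −M(t,t)⁻¹(½B(t)ᵀ∇ₓV(t,x) + S(t,t)x + ρ(t,t)), and assume that for each (t,x) the curve Y_{t,x} is the unique solution of the closed-loop equation y(s) = x + ∫_t^s (A(τ)y(τ) + B(τ)ū(τ,y(τ)) + b(τ))dτ. Then V(t,x) = J(t,x;ū) for all (t,x) ∈ [0,T]×ℝⁿ, where J(t,x;ū) is the cost of the closed-loop control s ↦ ū(s, Y_{t,x}(s)). -/

import Mathlib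

open MeasureTheory Set Matrix Filter intervalIntegral

noncomputable section

attribute [local instance] Matrix.linftyOpNormedAddCommGroup Matrix.linftyOpNormedSpace

/-- The continuous linear map `y ↦ v ⬝ᵥ y` on `Fin n → ℝ`. -/
def dotCLM {n : ℕ} (v : Fin n → ℝ) : (Fin n → ℝ) →L[ℝ] ℝ :=
  LinearMap.toContinuousLinearMap
    { toFun := fun y => v ⬝ᵥ y
      map_add' := fun a b => dotProduct_add v a b
      map_smul' := fun c a => by simp [dotProduct_smul] }

/-- The continuous linear map `y ↦ A *ᵥ y`. -/
def mulVecCLM {k l : ℕ} (A : Matrix (Fin k) (Fin l) ℝ) : (Fin l → ℝ) →L[ℝ] (Fin k → ℝ) :=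
  LinearMap.toContinuousLinearMap A.mulVecLin

/-- Data and standing assumptions (H0)-(H5) of the time-inconsistent deterministic LQ problem,
together with the state transition matrix `E` of `A`. -/
structure LQ (n m : ℕ) : Type where
  T : ℝ
  A : ℝ → Matrix (Fin n) (Fin n) ℝ
  B : ℝ → Matrix (Fin n) (Fin m) ℝ
  b : ℝ → Fin n → ℝ
  M : ℝ → ℝ → Matrix (Fin m) (Fin m) ℝ
  Q : ℝ → ℝ → Matrix (Fin n) (Fin n) ℝ
  S : ℝ → ℝ → Matrix (Fin m) (Fin n) ℝ
  q : ℝ → ℝ → Fin n → ℝ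
  ρ : ℝ → ℝ → Fin m → ℝ
  G : ℝ → Matrix (Fin n) (Fin n) ℝ
  G' : ℝ → Matrix (Fin n) (Fin n) ℝ
  g : ℝ → Fin n → ℝ
  g' : ℝ → Fin n → ℝ
  Mt : ℝ → ℝ → Matrix (Fin m) (Fin m) ℝ
  Qt : ℝ → ℝ → Matrix (Fin n) (Fin n) ℝ
  St : ℝ → ℝ → Matrix (Fin m) (Fin n) ℝ
  qt : ℝ → ℝ → Fin n → ℝ
  ρt : ℝ → ℝ → Fin m → ℝ
  E : ℝ → ℝ → Matrix (Fin n) (Fin n) ℝ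
  hT : 0 < T
  hA : @IntervalIntegrable _ PseudoMetricSpace.toUniformSpace.toTopologicalSpace _ A MeasureTheory.volume 0 T
  hB : @MemLp _ _ _ _ PseudoMetricSpace.toUniformSpace.toTopologicalSpace B 2 (MeasureTheory.volume.restrict (Set.Ioc 0 T))
  hb : IntervalIntegrable b MeasureTheory.volume 0 T
  hM : ContinuousOn (fun p : ℝ × ℝ => M p.1 p.2) (Set.Icc 0 T ×ˢ Set.Icc 0 T)
  hMsymm : ∀ t s, (M t s).IsSymm
  hMpos : ∀ t s, (M t s).PosDef
  hQ : ContinuousOn (fun p : ℝ × ℝ => Q p.1 p.2) (Set.Icc 0 T ×ˢ Set.Icc 0 T)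
  hQsymm : ∀ t s, (Q t s).IsSymm
  hQpos : ∀ t s, (Q t s).PosSemidef
  hS : ContinuousOn (fun p : ℝ × ℝ => S p.1 p.2) (Set.Icc 0 T ×ˢ Set.Icc 0 T)
  hq : ContinuousOn (fun p : ℝ × ℝ => q p.1 p.2) (Set.Icc 0 T ×ˢ Set.Icc 0 T)
  hρ : ContinuousOn (fun p : ℝ × ℝ => ρ p.1 p.2) (Set.Icc 0 T ×ˢ Set.Icc 0 T)
  hGsymm : ∀ t, (G t).IsSymm
  hGpos : ∀ t, (G t).PosSemidef
  hGcont : ContinuousOn G (Set.Icc 0 T)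
  hG : ∀ t ∈ Set.Icc 0 T, HasDerivAt G (G' t) t
  hG' : ContinuousOn G' (Set.Icc 0 T)
  hgcont : ContinuousOn g (Set.Icc 0 T)
  hg : ∀ t ∈ Set.Icc 0 T, HasDerivAt g (g' t) t
  hg' : ContinuousOn g' (Set.Icc 0 T)
  hMt : ∀ s : ℝ, ∀ t ∈ Set.Icc 0 T, HasDerivAt (fun τ => M τ s) (Mt t s) t
  hMt' : ContinuousOn (fun p : ℝ × ℝ => Mt p.1 p.2) (Set.Icc 0 T ×ˢ Set.Icc 0 T)
  hQt : ∀ s : ℝ, ∀ t ∈ Set.Icc 0 T, HasDerivAt (fun τ => Q τ s) (Qt t s) t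
  hQt' : ContinuousOn (fun p : ℝ × ℝ => Qt p.1 p.2) (Set.Icc 0 T ×ˢ Set.Icc 0 T)
  hSt : ∀ s : ℝ, ∀ t ∈ Set.Icc 0 T, HasDerivAt (fun τ => S τ s) (St t s) t
  hSt' : ContinuousOn (fun p : ℝ × ℝ => St p.1 p.2) (Set.Icc 0 T ×ˢ Set.Icc 0 T)
  hqt : ∀ s : ℝ, ∀ t ∈ Set.Icc 0 T, HasDerivAt (fun τ => q τ s) (qt t s) t
  hqt' : ContinuousOn (fun p : ℝ × ℝ => qt p.1 p.2) (Set.Icc 0 T ×ˢ Set.Icc 0 T)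
  hρt : ∀ s : ℝ, ∀ t ∈ Set.Icc 0 T, HasDerivAt (fun τ => ρ τ s) (ρt t s) t
  hρt' : ContinuousOn (fun p : ℝ × ℝ => ρt p.1 p.2) (Set.Icc 0 T ×ˢ Set.Icc 0 T)
  hE : ∀ t ∈ Set.Icc 0 T, ContinuousOn (fun s => E s t) (Set.Icc 0 T)
  hEeq : ∀ t ∈ Set.Icc 0 T, ∀ s ∈ Set.Icc 0 T, E s t = 1 + ∫ r in t..s, A r * E r t

namespace LQ

variable {n m : ℕ}

/-- `h(t,x,p) = M(t,t)⁻¹ (½ B(t)ᵀ p + S(t,t) x + ρ(t,t))`. -/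
def h (D : LQ n m) (t : ℝ) (x p : Fin n → ℝ) : Fin m → ℝ :=
  (D.M t t)⁻¹ *ᵥ ((2:ℝ)⁻¹ • ((D.B t)ᵀ *ᵥ p) + D.S t t *ᵥ x + D.ρ t t)

/-- `H̃(t,x,p)`. -/
def Ham (D : LQ n m) (t : ℝ) (x p : Fin n → ℝ) : ℝ :=
  ((2:ℝ)⁻¹ • ((D.B t)ᵀ *ᵥ p) - D.S t t *ᵥ x - D.ρ t t) ⬝ᵥ D.h t x p
    + (D.Q t t *ᵥ x + (2:ℝ) • D.q t t) ⬝ᵥ x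

/-- `F(t,s,x,p)`. -/
def F (D : LQ n m) (t s : ℝ) (x p : Fin n → ℝ) : ℝ :=
  (D.Mt t s *ᵥ D.h s x p - (2:ℝ) • (D.St t s *ᵥ x) - (2:ℝ) • D.ρt t s) ⬝ᵥ D.h s x p
    + (D.Qt t s *ᵥ x + (2:ℝ) • D.qt t s) ⬝ᵥ x

/-- `(Y,V)` (with gradient data `Vx`) is a solution of the equilibrium HJB equation. -/
structure IsHJBSol (D : LQ n m) (Y : ℝ → (Fin n → ℝ) → ℝ → Fin n → ℝ)
    (V : ℝ → (Fin n → ℝ) → ℝ) (Vx : ℝ → (Fin n → ℝ) → Fin n → ℝ) : Prop where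
  contV : ContinuousOn (fun p : ℝ × (Fin n → ℝ) => V p.1 p.2) (Set.Icc 0 D.T ×ˢ Set.univ)
  gradV : ∀ t ∈ Set.Icc 0 D.T, ∀ x, HasFDerivAt (V t) (dotCLM (Vx t x)) x
  contVx : ContinuousOn (fun p : ℝ × (Fin n → ℝ) => Vx p.1 p.2) (Set.Icc 0 D.T ×ˢ Set.univ)
  contY : ∀ t ∈ Set.Icc 0 D.T, ∀ x, ContinuousOn (Y t x) (Set.Icc t D.T)
  stateEq : ∀ t ∈ Set.Icc 0 D.T, ∀ x, ∀ s ∈ Set.Icc t D.T,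
    Y t x s = D.E s t *ᵥ x
      + ∫ τ in t..s, D.E s τ *ᵥ (D.b τ - D.B τ *ᵥ D.h τ (Y t x τ) (Vx τ (Y t x τ)))
  valEq : ∀ t ∈ Set.Icc 0 D.T, ∀ x,
    V t x = (D.G t *ᵥ Y t x D.T + (2:ℝ) • D.g t) ⬝ᵥ Y t x D.T
      + ∫ τ in t..D.T, (D.Ham τ (Y t x τ) (Vx τ (Y t x τ))
          - ∫ s in τ..D.T, D.F τ s (Y t x s) (Vx s (Y t x s)))

/-- Additional regularity: `V` is C¹ in `t` on `(0,T)` and C² in `x`, with data `Vt`, `Vxx`. -/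
structure HJBReg (D : LQ n m) (V : ℝ → (Fin n → ℝ) → ℝ)
    (Vx : ℝ → (Fin n → ℝ) → Fin n → ℝ) (Vt : ℝ → (Fin n → ℝ) → ℝ)
    (Vxx : ℝ → (Fin n → ℝ) → Matrix (Fin n) (Fin n) ℝ) : Prop where
  derivT : ∀ x, ∀ t ∈ Set.Ioo 0 D.T, HasDerivAt (fun τ => V τ x) (Vt t x) t
  contVt : ContinuousOn (fun p : ℝ × (Fin n → ℝ) => Vt p.1 p.2) (Set.Ioo 0 D.T ×ˢ Set.univ)
  hessV : ∀ t ∈ Set.Icc 0 D.T, ∀ x, HasFDerivAt (Vx t) (mulVecCLM (Vxx t x)) x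
  contVxx : ContinuousOn (fun p : ℝ × (Fin n → ℝ) => Vxx p.1 p.2) (Set.Icc 0 D.T ×ˢ Set.univ)

/-- `Γ_P(t) = M(t,t)⁻¹ (B(t)ᵀ P(t) + S(t,t))`. -/
def Gam (D : LQ n m) (P : ℝ → Matrix (Fin n) (Fin n) ℝ) (t : ℝ) : Matrix (Fin m) (Fin n) ℝ :=
  (D.M t t)⁻¹ * ((D.B t)ᵀ * P t + D.S t t)

/-- `EP` is the perturbed state-transition matrix `𝔼_P` on `[t₀,T]`. -/
def IsPTrans (D : LQ n m) (t₀ : ℝ) (P : ℝ → Matrix (Fin n) (Fin n) ℝ)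
    (EP : ℝ → ℝ → Matrix (Fin n) (Fin n) ℝ) : Prop :=
  (∀ t ∈ Set.Icc t₀ D.T, ContinuousOn (fun s => EP s t) (Set.Icc t D.T)) ∧
  ∀ t ∈ Set.Icc t₀ D.T, ∀ s ∈ Set.Icc t D.T,
    EP s t = D.E s t - ∫ τ in t..s, D.E s τ * D.B τ * D.Gam P τ * EP τ t

/-- The operator `𝔾(s;t,P)` (built from the perturbed transition matrix `EP`). -/
def Gop (D : LQ n m) (P : ℝ → Matrix (Fin n) (Fin n) ℝ)
    (EP : ℝ → ℝ → Matrix (Fin n) (Fin n) ℝ) (s t : ℝ) : Matrix (Fin n) (Fin n) ℝ :=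
  (EP D.T s)ᵀ * D.G' t * EP D.T s
    + ∫ τ in s..D.T, (EP τ s)ᵀ *
        (D.Qt t τ + (D.Gam P τ)ᵀ * D.Mt t τ * D.Gam P τ
          - (D.St t τ)ᵀ * D.Gam P τ - (D.Gam P τ)ᵀ * D.St t τ) * EP τ s

/-- `ℚ_P(t) = 𝔾(t;t,P)`. -/
def QP (D : LQ n m) (P : ℝ → Matrix (Fin n) (Fin n) ℝ)
    (EP : ℝ → ℝ → Matrix (Fin n) (Fin n) ℝ) (t : ℝ) : Matrix (Fin n) (Fin n) ℝ :=
  D.Gop P EP t t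

/-- `P` is a solution of the equilibrium Riccati equation on `[t₀,T]`
(with perturbed transition data `EP`). -/
def IsRiccatiOn (D : LQ n m) (t₀ : ℝ) (P : ℝ → Matrix (Fin n) (Fin n) ℝ)
    (EP : ℝ → ℝ → Matrix (Fin n) (Fin n) ℝ) : Prop :=
  ContinuousOn P (Set.Icc t₀ D.T) ∧ D.IsPTrans t₀ P EP ∧
  ∀ t ∈ Set.Icc t₀ D.T,
    P t = (D.E D.T t)ᵀ * D.G D.T * D.E D.T t
      + ∫ τ in t..D.T, (D.E τ t)ᵀ *
          (D.Q τ τ - D.QP P EP τ - (D.Gam P τ)ᵀ * D.M τ τ * D.Gam P τ) * D.E τ t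

/-- `Υ(t) = M(t,t)⁻¹ (B(t)ᵀ φ(t) + ρ(t,t))`. -/
def Ups (D : LQ n m) (φ : ℝ → Fin n → ℝ) (t : ℝ) : Fin m → ℝ :=
  (D.M t t)⁻¹ *ᵥ ((D.B t)ᵀ *ᵥ φ t + D.ρ t t)

/-- `b̃(s,t)`. -/
def btil (D : LQ n m) (EP : ℝ → ℝ → Matrix (Fin n) (Fin n) ℝ)
    (φ : ℝ → Fin n → ℝ) (s t : ℝ) : Fin n → ℝ :=
  ∫ τ in t..s, EP s τ *ᵥ (D.b τ - D.B τ *ᵥ D.Ups φ τ)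

/-- `𝕊(t)`. -/
def SS (D : LQ n m) (P : ℝ → Matrix (Fin n) (Fin n) ℝ)
    (EP : ℝ → ℝ → Matrix (Fin n) (Fin n) ℝ) (φ : ℝ → Fin n → ℝ) (t : ℝ) : Fin n → ℝ :=
  (EP D.T t)ᵀ *ᵥ D.g' t + (EP D.T t)ᵀ *ᵥ (D.G' t *ᵥ D.btil EP φ D.T t)
    + ∫ s in t..D.T, (EP s t)ᵀ *ᵥ
        (D.Qt t s *ᵥ D.btil EP φ s t
          - ((D.Gam P s)ᵀ * D.St t s + (D.St t s)ᵀ * D.Gam P s) *ᵥ D.btil EP φ s t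
          + D.qt t s - (D.St t s)ᵀ *ᵥ D.Ups φ s
          + (D.Gam P s)ᵀ *ᵥ (D.Mt t s *ᵥ (D.Ups φ s + D.Gam P s *ᵥ D.btil EP φ s t))
          - (D.Gam P s)ᵀ *ᵥ D.ρt t s)

/-- `ω(t)`. -/
def omg (D : LQ n m) (P : ℝ → Matrix (Fin n) (Fin n) ℝ)
    (EP : ℝ → ℝ → Matrix (Fin n) (Fin n) ℝ) (φ : ℝ → Fin n → ℝ) (t : ℝ) : ℝ :=
  (D.G' t *ᵥ D.btil EP φ D.T t + (2:ℝ) • D.g' t) ⬝ᵥ D.btil EP φ D.T t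
    + (∫ s in t..D.T, (D.Qt t s *ᵥ D.btil EP φ s t) ⬝ᵥ D.btil EP φ s t)
    + 2 * (∫ s in t..D.T,
        (D.qt t s - (D.Gam P s)ᵀ *ᵥ (D.St t s *ᵥ D.btil EP φ s t)
          - (D.St t s)ᵀ *ᵥ D.Ups φ s) ⬝ᵥ D.btil EP φ s t)
    + ∫ s in t..D.T,
        (D.Mt t s *ᵥ (D.Gam P s *ᵥ D.btil EP φ s t + D.Ups φ s) - (2:ℝ) • D.ρt t s)
          ⬝ᵥ (D.Gam P s *ᵥ D.btil EP φ s t + D.Ups φ s)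

/-- `φ` solves equation (3.22) (associated with `P`, with transition data `EP`). -/
def Solves322 (D : LQ n m) (P : ℝ → Matrix (Fin n) (Fin n) ℝ)
    (EP : ℝ → ℝ → Matrix (Fin n) (Fin n) ℝ) (φ : ℝ → Fin n → ℝ) : Prop :=
  ContinuousOn φ (Set.Icc 0 D.T) ∧
  ∀ t ∈ Set.Icc 0 D.T,
    φ t = D.g D.T + ∫ τ in t..D.T,
      ((D.A τ - D.B τ * D.Gam P τ)ᵀ *ᵥ φ τ - D.SS P EP φ τ + P τ *ᵥ D.b τ
        + D.q τ τ - (D.Gam P τ)ᵀ *ᵥ D.ρ τ τ)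

/-- `ψ` solves equation (3.23). -/
def Solves323 (D : LQ n m) (P : ℝ → Matrix (Fin n) (Fin n) ℝ)
    (EP : ℝ → ℝ → Matrix (Fin n) (Fin n) ℝ) (φ : ℝ → Fin n → ℝ) (ψ : ℝ → ℝ) : Prop :=
  ContinuousOn ψ (Set.Icc 0 D.T) ∧
  ∀ t ∈ Set.Icc 0 D.T,
    ψ t = ∫ τ in t..D.T,
      (2 * (φ τ ⬝ᵥ (D.b τ - D.B τ *ᵥ D.Ups φ τ)) - D.omg P EP φ τ
        + (D.M τ τ *ᵥ D.Ups φ τ - (2:ℝ) • D.ρ τ τ) ⬝ᵥ D.Ups φ τ)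

/-- The cost functional `J(t, x; u)` evaluated along a control `u` and its trajectory `y`. -/
def cost (D : LQ n m) (t : ℝ) (u : ℝ → Fin m → ℝ) (y : ℝ → Fin n → ℝ) : ℝ :=
  (∫ s in t..D.T,
    ((D.Q t s *ᵥ y s) ⬝ᵥ y s + 2 * ((D.S t s *ᵥ y s) ⬝ᵥ u s) + (D.M t s *ᵥ u s) ⬝ᵥ u s
      + 2 * (D.q t s ⬝ᵥ y s) + 2 * (D.ρ t s ⬝ᵥ u s)))
    + (D.G t *ᵥ y D.T) ⬝ᵥ y D.T + 2 * (D.g t ⬝ᵥ y D.T)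

/-- `y` is the trajectory on `[t,s₁]` of the open-loop control `u` with initial state `x` at `t`. -/
def IsTrajOn (D : LQ n m) (t s₁ : ℝ) (x : Fin n → ℝ) (u : ℝ → Fin m → ℝ)
    (y : ℝ → Fin n → ℝ) : Prop :=
  ContinuousOn y (Set.Icc t s₁) ∧
  ∀ s ∈ Set.Icc t s₁, y s = x + ∫ τ in t..s, (D.A τ *ᵥ y τ + D.B τ *ᵥ u τ + D.b τ)

/-- `y` is the trajectory on `[t,T]` of the open-loop control `u` starting from `(t,x)`. -/
def IsTraj (D : LQ n m) (t : ℝ) (x : Fin n → ℝ) (u : ℝ → Fin m → ℝ)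
    (y : ℝ → Fin n → ℝ) : Prop :=
  D.IsTrajOn t D.T x u y

/-- `y` solves the closed-loop equation for the feedback law `ub` starting from `(t,x)`. -/
def IsClosedLoop (D : LQ n m) (t : ℝ) (x : Fin n → ℝ)
    (ub : ℝ → (Fin n → ℝ) → Fin m → ℝ) (y : ℝ → Fin n → ℝ) : Prop :=
  ContinuousOn y (Set.Icc t D.T) ∧
  ∀ s ∈ Set.Icc t D.T, y s = x + ∫ τ in t..s, (D.A τ *ᵥ y τ + D.B τ *ᵥ ub τ (y τ) + D.b τ)

/-- The equilibrium error function `R(t,·)` along a trajectory `y` of the feedback law `ub`. -/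
def Rerr (D : LQ n m) (ub : ℝ → (Fin n → ℝ) → Fin m → ℝ) (y : ℝ → Fin n → ℝ) (t : ℝ) : ℝ :=
  (D.G' t *ᵥ y D.T + (2:ℝ) • D.g' t) ⬝ᵥ y D.T
    + ∫ s in t..D.T,
        ((D.Qt t s *ᵥ y s + (2:ℝ) • D.qt t s) ⬝ᵥ y s
          + (D.Mt t s *ᵥ ub s (y s) + (2:ℝ) • (D.St t s *ᵥ y s) + (2:ℝ) • D.ρt t s)
              ⬝ᵥ ub s (y s))

end LQ

/-- sup-norm of a scalar function over a set. -/
def supAbsOn (f : ℝ → ℝ) (s : Set ℝ) : ℝ := sSup ((fun t => |f t|) '' s)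

/-- `‖O‖_C = maxᵢ Σⱼ sup_t |oᵢⱼ(t)|` for a one-variable matrix function. -/
def CnormOn {k l : ℕ} (f : ℝ → Matrix (Fin k) (Fin l) ℝ) (s : Set ℝ) : ℝ :=
  ⨆ i, ∑ j, supAbsOn (fun t => f t i j) s

/-- `‖O‖_C` for a two-variable matrix function over `s × s`. -/
def Cnorm2On {k l : ℕ} (f : ℝ → ℝ → Matrix (Fin k) (Fin l) ℝ) (s : Set ℝ) : ℝ :=
  ⨆ i, ∑ j, sSup ((fun p : ℝ × ℝ => |f p.1 p.2 i j|) '' (s ×ˢ s))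

/-- `‖O‖_{L¹} = maxᵢ Σⱼ ∫₀ᵀ |oᵢⱼ|`. -/
def L1norm {k l : ℕ} (f : ℝ → Matrix (Fin k) (Fin l) ℝ) (T : ℝ) : ℝ :=
  ⨆ i, ∑ j, ∫ t in (0:ℝ)..T, |f t i j|

/-- `‖O‖_{L²} = maxᵢ Σⱼ (∫₀ᵀ |oᵢⱼ|²)^{1/2}`. -/
def L2norm {k l : ℕ} (f : ℝ → Matrix (Fin k) (Fin l) ℝ) (T : ℝ) : ℝ :=
  ⨆ i, ∑ j, Real.sqrt (∫ t in (0:ℝ)..T, (f t i j) ^ 2)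

/-- `‖O‖_{C¹}` for a one-variable matrix function with derivative `f'`. -/
def C1norm1 {k l : ℕ} (f f' : ℝ → Matrix (Fin k) (Fin l) ℝ) (T : ℝ) : ℝ :=
  ⨆ i, ∑ j, (supAbsOn (fun t => f t i j) (Set.Icc 0 T)
    + supAbsOn (fun t => f' t i j) (Set.Icc 0 T))

/-- `‖O‖_{C¹}` for a two-variable matrix function with first-variable derivative `f'`. -/
def C1norm2 {k l : ℕ} (f f' : ℝ → ℝ → Matrix (Fin k) (Fin l) ℝ) (T : ℝ) : ℝ :=
  ⨆ i, ∑ j, (sSup ((fun p : ℝ × ℝ => |f p.1 p.2 i j|) '' (Set.Icc 0 T ×ˢ Set.Icc 0 T))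
    + sSup ((fun p : ℝ × ℝ => |f' p.1 p.2 i j|) '' (Set.Icc 0 T ×ˢ Set.Icc 0 T)))

instance verifMatrixPMS {k l : ℕ} : TopologicalSpace.PseudoMetrizableSpace (Matrix (Fin k) (Fin l) ℝ) :=
  inferInstanceAs (TopologicalSpace.PseudoMetrizableSpace (Fin k → Fin l → ℝ))

namespace VerifAux

variable {α : Type*} [TopologicalSpace α] {β : Type*} [MeasurableSpace β] {μ : Measure β}

lemma aesm_mulVec {k l : ℕ} {f : β → Matrix (Fin k) (Fin l) ℝ} {g : β → Fin l → ℝ}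
    (hf : AEStronglyMeasurable f μ) (hg : AEStronglyMeasurable g μ) :
    AEStronglyMeasurable (fun a => f a *ᵥ g a) μ :=
  (continuous_fst.matrix_mulVec continuous_snd).comp_aestronglyMeasurable (hf.prodMk hg)

lemma aesm_dot {k : ℕ} {f g : β → Fin k → ℝ}
    (hf : AEStronglyMeasurable f μ) (hg : AEStronglyMeasurable g μ) :
    AEStronglyMeasurable (fun a => f a ⬝ᵥ g a) μ :=
  (continuous_fst.dotProduct continuous_snd).comp_aestronglyMeasurable (hf.prodMk hg)

lemma contOn_mulVec {k l : ℕ} {f : α → Matrix (Fin k) (Fin l) ℝ} {g : α → Fin l → ℝ}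
    {s : Set α} (hf : ContinuousOn f s) (hg : ContinuousOn g s) :
    ContinuousOn (fun a => f a *ᵥ g a) s :=
  (continuous_fst.matrix_mulVec continuous_snd).comp_continuousOn (hf.prodMk hg)

lemma contOn_dot {k : ℕ} {f g : α → Fin k → ℝ} {s : Set α}
    (hf : ContinuousOn f s) (hg : ContinuousOn g s) :
    ContinuousOn (fun a => f a ⬝ᵥ g a) s :=
  (continuous_fst.dotProduct continuous_snd).comp_continuousOn (hf.prodMk hg)

/-- The CLM `A ↦ (A *ᵥ v) ⬝ᵥ w`. -/
def mvdCLM {k l : ℕ} (v : Fin l → ℝ) (w : Fin k → ℝ) : Matrix (Fin k) (Fin l) ℝ →L[ℝ] ℝ :=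
  LinearMap.toContinuousLinearMap
    { toFun := fun A => (A *ᵥ v) ⬝ᵥ w
      map_add' := fun A B => by simp [Matrix.add_mulVec, add_dotProduct]
      map_smul' := fun c A => by simp [Matrix.smul_mulVec, smul_dotProduct] }

/-- The CLM `a ↦ a ⬝ᵥ w`. -/
def dCLM {k : ℕ} (w : Fin k → ℝ) : (Fin k → ℝ) →L[ℝ] ℝ :=
  LinearMap.toContinuousLinearMap
    { toFun := fun a => a ⬝ᵥ w
      map_add' := fun a b => by simp [add_dotProduct]
      map_smul' := fun c a => by simp [smul_dotProduct] }

lemma hasDerivAt_mvd {k l : ℕ} {f : ℝ → Matrix (Fin k) (Fin l) ℝ}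
    {f' : Matrix (Fin k) (Fin l) ℝ} {τ : ℝ} (hf : HasDerivAt f f' τ) (v : Fin l → ℝ)
    (w : Fin k → ℝ) : HasDerivAt (fun τ => (f τ *ᵥ v) ⬝ᵥ w) ((f' *ᵥ v) ⬝ᵥ w) τ :=
  (mvdCLM v w).hasFDerivAt.comp_hasDerivAt τ hf

lemma hasDerivAt_dot {k : ℕ} {f : ℝ → Fin k → ℝ} {f' : Fin k → ℝ} {τ : ℝ}
    (hf : HasDerivAt f f' τ) (w : Fin k → ℝ) :
    HasDerivAt (fun τ => f τ ⬝ᵥ w) (f' ⬝ᵥ w) τ :=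
  (dCLM w).hasFDerivAt.comp_hasDerivAt τ hf

lemma entry_abs_le {k l : ℕ} (A : Matrix (Fin k) (Fin l) ℝ) (i : Fin k) (j : Fin l) :
    |A i j| ≤ ‖A‖ := by
  have h : ‖A i j‖₊ ≤ ‖A‖₊ := by
    rw [Matrix.linfty_opNNNorm_def]
    exact le_trans
      (Finset.single_le_sum (f := fun j => ‖A i j‖₊) (fun _ _ => zero_le) (Finset.mem_univ j))
      (Finset.le_sup (f := fun i => ∑ j, ‖A i j‖₊) (Finset.mem_univ i))
  calc |A i j| = ‖A i j‖ := (Real.norm_eq_abs _).symm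
  _ ≤ ‖A‖ := h

lemma abs_dot_le {k : ℕ} (a b : Fin k → ℝ) : |a ⬝ᵥ b| ≤ k * ‖a‖ * ‖b‖ := by
  calc |a ⬝ᵥ b| ≤ ∑ i, |a i * b i| := Finset.abs_sum_le_sum_abs _ _
  _ ≤ ∑ _i : Fin k, ‖a‖ * ‖b‖ := Finset.sum_le_sum fun i _ => by
      rw [abs_mul]
      exact mul_le_mul ((Real.norm_eq_abs _) ▸ norm_le_pi_norm a i)
        ((Real.norm_eq_abs _) ▸ norm_le_pi_norm b i) (abs_nonneg _) (norm_nonneg _)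
  _ = k * ‖a‖ * ‖b‖ := by simp [mul_assoc]

lemma norm_transpose_mulVec_le {k l : ℕ} (A : Matrix (Fin k) (Fin l) ℝ) (v : Fin k → ℝ) :
    ‖Aᵀ *ᵥ v‖ ≤ k * ‖A‖ * ‖v‖ := by
  have hnn : (0:ℝ) ≤ k * ‖A‖ * ‖v‖ := by positivity
  rw [pi_norm_le_iff_of_nonneg hnn]
  intro j
  have : (Aᵀ *ᵥ v) j = ∑ i, A i j * v i := by
    simp [Matrix.mulVec, dotProduct, Matrix.transpose_apply, mul_comm]
  rw [Real.norm_eq_abs, this]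
  calc |∑ i, A i j * v i| ≤ ∑ i, |A i j * v i| := Finset.abs_sum_le_sum_abs _ _
  _ ≤ ∑ _i : Fin k, ‖A‖ * ‖v‖ := Finset.sum_le_sum fun i _ => by
      rw [abs_mul]
      exact mul_le_mul (entry_abs_le A i j)
        ((Real.norm_eq_abs _) ▸ norm_le_pi_norm v i) (abs_nonneg _) (norm_nonneg _)
  _ = k * ‖A‖ * ‖v‖ := by simp [mul_assoc]


set_option maxHeartbeats 2000000 in
lemma quad_bound {n m : ℕ} {K1 K2 : ℝ} (hK1 : 0 ≤ K1) (hK2 : 0 ≤ K2)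
    {QQ : Matrix (Fin n) (Fin n) ℝ} {SS : Matrix (Fin m) (Fin n) ℝ}
    {MM : Matrix (Fin m) (Fin m) ℝ} {qq : Fin n → ℝ} {rr : Fin m → ℝ}
    {a : Fin n → ℝ} {v : Fin m → ℝ}
    (hQ : ‖QQ‖ ≤ K1) (hS : ‖SS‖ ≤ K1) (hM : ‖MM‖ ≤ K1) (hq : ‖qq‖ ≤ K1) (hr : ‖rr‖ ≤ K1)
    (ha : ‖a‖ ≤ K2) :
    |(QQ *ᵥ a) ⬝ᵥ a + 2 * ((SS *ᵥ a) ⬝ᵥ v) + (MM *ᵥ v) ⬝ᵥ v + 2 * (qq ⬝ᵥ a) + 2 * (rr ⬝ᵥ v)|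
      ≤ 8 * ((n:ℝ) + (m:ℝ)) * (K1 + 1) * (K2 + 1) ^ 2 * (1 + ‖v‖) ^ 2 := by
  have hV0 : (0:ℝ) ≤ ‖v‖ := norm_nonneg _
  have hn0 : (0:ℝ) ≤ (n:ℝ) := Nat.cast_nonneg n
  have hm0 : (0:ℝ) ≤ (m:ℝ) := Nat.cast_nonneg m
  have b1 : |(QQ *ᵥ a) ⬝ᵥ a| ≤ (n:ℝ) * (K1 * K2) * K2 := by
    refine (abs_dot_le _ _).trans ?_
    have h1 : ‖QQ *ᵥ a‖ ≤ K1 * K2 :=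
      (Matrix.linfty_opNorm_mulVec _ _).trans (mul_le_mul hQ ha (norm_nonneg _) hK1)
    have := mul_le_mul (mul_le_mul_of_nonneg_left h1 hn0) ha (norm_nonneg _) (by positivity)
    linarith
  have b2 : |(SS *ᵥ a) ⬝ᵥ v| ≤ (m:ℝ) * (K1 * K2) * ‖v‖ := by
    refine (abs_dot_le _ _).trans ?_
    have h1 : ‖SS *ᵥ a‖ ≤ K1 * K2 :=
      (Matrix.linfty_opNorm_mulVec _ _).trans (mul_le_mul hS ha (norm_nonneg _) hK1)
    have := mul_le_mul_of_nonneg_right (mul_le_mul_of_nonneg_left h1 hm0) hV0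
    linarith
  have b3 : |(MM *ᵥ v) ⬝ᵥ v| ≤ (m:ℝ) * (K1 * ‖v‖) * ‖v‖ := by
    refine (abs_dot_le _ _).trans ?_
    have h1 : ‖MM *ᵥ v‖ ≤ K1 * ‖v‖ :=
      (Matrix.linfty_opNorm_mulVec _ _).trans (mul_le_mul_of_nonneg_right hM hV0)
    have := mul_le_mul_of_nonneg_right (mul_le_mul_of_nonneg_left h1 hm0) hV0
    linarith
  have b4 : |qq ⬝ᵥ a| ≤ (n:ℝ) * K1 * K2 := by
    refine (abs_dot_le _ _).trans ?_
    have := mul_le_mul (mul_le_mul_of_nonneg_left hq hn0) ha (norm_nonneg _) (by positivity)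
    linarith
  have b5 : |rr ⬝ᵥ v| ≤ (m:ℝ) * K1 * ‖v‖ := by
    refine (abs_dot_le _ _).trans ?_
    have := mul_le_mul (mul_le_mul_of_nonneg_left hr hm0) le_rfl hV0 (by positivity)
    linarith
  have hnm1 : (n:ℝ) ≤ (n:ℝ) + (m:ℝ) := by linarith
  have hnm2 : (m:ℝ) ≤ (n:ℝ) + (m:ℝ) := by linarith
  have hK11 : K1 ≤ K1 + 1 := by linarith
  have A1 : (n:ℝ) * K1 ≤ ((n:ℝ) + (m:ℝ)) * (K1 + 1) := mul_le_mul hnm1 hK11 hK1 (by positivity)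
  have A2 : (m:ℝ) * K1 ≤ ((n:ℝ) + (m:ℝ)) * (K1 + 1) := mul_le_mul hnm2 hK11 hK1 (by positivity)
  have q1 : K2 ^ 2 ≤ (K2 + 1) ^ 2 := by nlinarith
  have q2 : (1:ℝ) ≤ (1 + ‖v‖) ^ 2 := by nlinarith
  have q3 : ‖v‖ ≤ (1 + ‖v‖) ^ 2 := by nlinarith
  have q4 : ‖v‖ ^ 2 ≤ (1 + ‖v‖) ^ 2 := by nlinarith
  have q5 : K2 ≤ (K2 + 1) ^ 2 := by nlinarith
  have q6 : (1:ℝ) ≤ (K2 + 1) ^ 2 := by nlinarith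
  have p1 : (n:ℝ) * (K1 * K2) * K2
      ≤ ((n:ℝ) + (m:ℝ)) * (K1 + 1) * (K2 + 1) ^ 2 * (1 + ‖v‖) ^ 2 := by
    have B := mul_le_mul A1 q1 (by positivity) (by positivity)
    have C := mul_le_mul B q2 (by norm_num) (by positivity)
    linarith [C]
  have p2 : (m:ℝ) * (K1 * K2) * ‖v‖
      ≤ ((n:ℝ) + (m:ℝ)) * (K1 + 1) * (K2 + 1) ^ 2 * (1 + ‖v‖) ^ 2 := by
    have q7 := mul_le_mul q5 q3 hV0 (by positivity)
    have C := mul_le_mul A2 q7 (by positivity) (by positivity)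
    linarith [C]
  have p3 : (m:ℝ) * (K1 * ‖v‖) * ‖v‖
      ≤ ((n:ℝ) + (m:ℝ)) * (K1 + 1) * (K2 + 1) ^ 2 * (1 + ‖v‖) ^ 2 := by
    have q8 := mul_le_mul q6 q4 (by norm_num) (by positivity)
    have C := mul_le_mul A2 q8 (by positivity) (by positivity)
    linarith [C]
  have p4 : (n:ℝ) * K1 * K2
      ≤ ((n:ℝ) + (m:ℝ)) * (K1 + 1) * (K2 + 1) ^ 2 * (1 + ‖v‖) ^ 2 := by
    have q9 := mul_le_mul q5 q2 (by norm_num) (by positivity)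
    have C := mul_le_mul A1 q9 (by positivity) (by positivity)
    linarith [C]
  have p5 : (m:ℝ) * K1 * ‖v‖
      ≤ ((n:ℝ) + (m:ℝ)) * (K1 + 1) * (K2 + 1) ^ 2 * (1 + ‖v‖) ^ 2 := by
    have q10 := mul_le_mul q6 q3 hV0 (by positivity)
    have C := mul_le_mul A2 q10 (by positivity) (by positivity)
    linarith [C]
  have scal : ∀ x1 x2 x3 x4 x5 : ℝ,
      |x1 + 2 * x2 + x3 + 2 * x4 + 2 * x5| ≤ |x1| + 2 * |x2| + |x3| + 2 * |x4| + 2 * |x5| := by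
    intro x1 x2 x3 x4 x5
    have h1 := abs_add_le (x1 + 2 * x2 + x3 + 2 * x4) (2 * x5)
    have h2 := abs_add_le (x1 + 2 * x2 + x3) (2 * x4)
    have h3 := abs_add_le (x1 + 2 * x2) x3
    have h4 := abs_add_le x1 (2 * x2)
    have e2 : |(2:ℝ)| = 2 := by norm_num
    rw [abs_mul, e2] at h1 h2 h4
    linarith
  have habs := scal ((QQ *ᵥ a) ⬝ᵥ a) ((SS *ᵥ a) ⬝ᵥ v) ((MM *ᵥ v) ⬝ᵥ v) (qq ⬝ᵥ a) (rr ⬝ᵥ v)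
  linarith

set_option maxHeartbeats 2000000 in
lemma triangle_swap {t T : ℝ} (htT : t ≤ T) (f : ℝ → ℝ → ℝ)
    (hmeas : AEStronglyMeasurable (fun p : ℝ × ℝ => f p.1 p.2)
      ((volume.restrict (Set.Ioc t T)).prod (volume.restrict (Set.Ioc t T))))
    (c : ℝ → ℝ) (hc : IntegrableOn c (Set.Ioc t T))
    (hfc : ∀ τ ∈ Set.Ioc t T, ∀ s ∈ Set.Ioc t T, |f τ s| ≤ c s) :
    IntervalIntegrable (fun τ => ∫ s in τ..T, f τ s) volume t T ∧
      ∫ τ in t..T, (∫ s in τ..T, f τ s) = ∫ s in t..T, (∫ τ in t..s, f τ s) := by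
  set ν := volume.restrict (Set.Ioc t T) with hν
  haveI : IsFiniteMeasure ν := by
    refine ⟨?_⟩
    rw [hν, Measure.restrict_apply_univ]
    exact measure_Ioc_lt_top
  set F : ℝ → ℝ → ℝ := fun τ s => if τ ≤ s then f τ s else 0 with hF
  have hFm : AEStronglyMeasurable (Function.uncurry F) (ν.prod ν) := by
    have hset : MeasurableSet {p : ℝ × ℝ | p.1 ≤ p.2} :=
      (isClosed_le continuous_fst continuous_snd).measurableSet
    have : Function.uncurry F = Set.indicator {p : ℝ × ℝ | p.1 ≤ p.2}
        (fun p : ℝ × ℝ => f p.1 p.2) := by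
      funext p
      simp only [Function.uncurry, hF, Set.indicator_apply, Set.mem_setOf_eq]
    rw [this]
    exact hmeas.indicator hset
  have hcsnd : Integrable (fun p : ℝ × ℝ => c p.2) (ν.prod ν) := by
    have hmc : AEStronglyMeasurable (fun p : ℝ × ℝ => c p.2) (ν.prod ν) :=
      hc.aestronglyMeasurable.comp_snd
    rw [MeasureTheory.integrable_prod_iff hmc]
    constructor
    · exact Filter.Eventually.of_forall fun τ => hc
    · have hconst : Integrable (fun _ : ℝ => ∫ s, ‖c s‖ ∂ν) ν := integrable_const _
      simpa using hconst
  have hFint : Integrable (Function.uncurry F) (ν.prod ν) := by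
    refine Integrable.mono' hcsnd.abs hFm ?_
    have hmem : ∀ᵐ p ∂ν.prod ν, p ∈ Set.Ioc t T ×ˢ Set.Ioc t T := by
      rw [hν, Measure.prod_restrict]
      exact ae_restrict_mem (measurableSet_Ioc.prod measurableSet_Ioc)
    filter_upwards [hmem] with p hp
    rcases hp with ⟨hp1, hp2⟩
    simp only [Function.uncurry, hF]
    rw [Real.norm_eq_abs]
    by_cases hle : p.1 ≤ p.2
    · simp only [hle, if_true]
      exact (hfc _ hp1 _ hp2).trans (le_abs_self _)
    · simp only [hle, if_false, abs_zero]
      exact abs_nonneg _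
  have h1 : ∀ τ ∈ Set.Ioc t T, (∫ s, F τ s ∂ν) = ∫ s in τ..T, f τ s := by
    intro τ hτ
    have heq : (fun s => F τ s) = Set.indicator (Set.Ici τ) (f τ) := by
      funext s
      simp only [hF, Set.indicator_apply, Set.mem_Ici]
    rw [heq, hν, MeasureTheory.integral_indicator measurableSet_Ici,
      Measure.restrict_restrict measurableSet_Ici]
    have hset : Set.Ici τ ∩ Set.Ioc t T = Set.Icc τ T := by
      ext s
      simp only [Set.mem_inter_iff, Set.mem_Ici, Set.mem_Ioc, Set.mem_Icc]
      exact ⟨fun h => ⟨h.1, h.2.2⟩, fun h => ⟨h.1, lt_of_lt_of_le hτ.1 h.1, h.2⟩⟩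
    rw [hset, integral_Icc_eq_integral_Ioc, intervalIntegral.integral_of_le hτ.2]
  have h2 : ∀ s ∈ Set.Ioc t T, (∫ τ, F τ s ∂ν) = ∫ τ in t..s, f τ s := by
    intro s hs
    have heq : (fun τ => F τ s) = Set.indicator (Set.Iic s) (fun τ => f τ s) := by
      funext τ
      simp only [hF, Set.indicator_apply, Set.mem_Iic]
    rw [heq, hν, MeasureTheory.integral_indicator measurableSet_Iic,
      Measure.restrict_restrict measurableSet_Iic]
    have hset : Set.Iic s ∩ Set.Ioc t T = Set.Ioc t s := by
      ext τ
      simp only [Set.mem_inter_iff, Set.mem_Iic, Set.mem_Ioc]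
      exact ⟨fun h => ⟨h.2.1, h.1⟩, fun h => ⟨h.2, h.1, h.2.trans hs.2⟩⟩
    rw [hset, intervalIntegral.integral_of_le hs.1.le]
  have hwint : IntervalIntegrable (fun τ => ∫ s in τ..T, f τ s) volume t T := by
    rw [intervalIntegrable_iff_integrableOn_Ioc_of_le htT]
    have := hFint.integral_prod_left
    refine this.congr ?_
    filter_upwards [ae_restrict_mem measurableSet_Ioc] with τ hτ
    exact h1 τ hτ
  refine ⟨hwint, ?_⟩
  rw [intervalIntegral.integral_of_le htT, intervalIntegral.integral_of_le htT]
  calc ∫ τ in Set.Ioc t T, (∫ s in τ..T, f τ s) = ∫ τ, (∫ s, F τ s ∂ν) ∂ν :=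
        (setIntegral_congr_fun measurableSet_Ioc fun τ hτ => (h1 τ hτ).symm)
  _ = ∫ s, (∫ τ, F τ s ∂ν) ∂ν := MeasureTheory.integral_integral_swap hFint
  _ = ∫ s in Set.Ioc t T, (∫ τ in t..s, f τ s) :=
        setIntegral_congr_fun measurableSet_Ioc fun s hs => h2 s hs

end VerifAux

namespace VerifAux

open MeasureTheory

lemma aesm_fix_fst {β : Type*} [TopologicalSpace β] [TopologicalSpace.PseudoMetrizableSpace β]
    {t T c : ℝ} (h0t : 0 ≤ t) (hc : c ∈ Set.Icc 0 T) {f : ℝ × ℝ → β}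
    (hf : ContinuousOn f (Set.Icc 0 T ×ˢ Set.Icc 0 T)) :
    AEStronglyMeasurable (fun s => f (c, s)) (volume.restrict (Set.Ioc t T)) := by
  have hsub : Set.Ioc t T ⊆ Set.Icc 0 T := fun s hs => ⟨h0t.trans hs.1.le, hs.2⟩
  have hcont : ContinuousOn (fun s => f (c, s)) (Set.Ioc t T) :=
    hf.comp (continuousOn_const.prodMk continuousOn_id) fun s hs => ⟨hc, hsub hs⟩
  exact hcont.aestronglyMeasurable measurableSet_Ioc

lemma aesm_diag {β : Type*} [TopologicalSpace β] [TopologicalSpace.PseudoMetrizableSpace β]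
    {t T : ℝ} (h0t : 0 ≤ t) {f : ℝ × ℝ → β}
    (hf : ContinuousOn f (Set.Icc 0 T ×ˢ Set.Icc 0 T)) :
    AEStronglyMeasurable (fun s => f (s, s)) (volume.restrict (Set.Ioc t T)) := by
  have hsub : Set.Ioc t T ⊆ Set.Icc 0 T := fun s hs => ⟨h0t.trans hs.1.le, hs.2⟩
  have hcont : ContinuousOn (fun s => f (s, s)) (Set.Ioc t T) :=
    hf.comp (continuousOn_id.prodMk continuousOn_id) fun s hs => ⟨hsub hs, hsub hs⟩
  exact hcont.aestronglyMeasurable measurableSet_Ioc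

end VerifAux

set_option maxHeartbeats 4000000 in
/-- Verification, cost identity. -/
theorem verification_cost_identity {n m : ℕ} (D : LQ n m)
    (Y : ℝ → (Fin n → ℝ) → ℝ → Fin n → ℝ)
    (V : ℝ → (Fin n → ℝ) → ℝ)
    (Vx : ℝ → (Fin n → ℝ) → Fin n → ℝ)
    (hsol : D.IsHJBSol Y V Vx)
    (hclosed : ∀ t ∈ Set.Icc 0 D.T, ∀ x : Fin n → ℝ,
      D.IsClosedLoop t x (fun s y => -D.h s y (Vx s y)) (Y t x) ∧
      ∀ y : ℝ → Fin n → ℝ, D.IsClosedLoop t x (fun s y' => -D.h s y' (Vx s y')) y →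
        ∀ s ∈ Set.Icc t D.T, y s = Y t x s) :
    ∀ t ∈ Set.Icc 0 D.T, ∀ x : Fin n → ℝ,
      V t x = D.cost t (fun s => -D.h s (Y t x s) (Vx s (Y t x s))) (Y t x) := by
  intro t ht x
  obtain ⟨ht0, htT⟩ := ht
  have hval := hsol.valEq t ⟨ht0, htT⟩ x
  set y : ℝ → Fin n → ℝ := Y t x with hy
  set u : ℝ → Fin m → ℝ := fun s => -D.h s (y s) (Vx s (y s)) with hu
  set r : ℝ → ℝ → ℝ := fun τ s =>
    (D.Q τ s *ᵥ y s) ⬝ᵥ y s + 2 * ((D.S τ s *ᵥ y s) ⬝ᵥ u s) + (D.M τ s *ᵥ u s) ⬝ᵥ u s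
      + 2 * (D.q τ s ⬝ᵥ y s) + 2 * (D.ρ τ s ⬝ᵥ u s) with hr
  set rt : ℝ → ℝ → ℝ := fun τ s =>
    (D.Qt τ s *ᵥ y s) ⬝ᵥ y s + 2 * ((D.St τ s *ᵥ y s) ⬝ᵥ u s) + (D.Mt τ s *ᵥ u s) ⬝ᵥ u s
      + 2 * (D.qt τ s ⬝ᵥ y s) + 2 * (D.ρt τ s ⬝ᵥ u s) with hrt
  -- basic algebra
  have hh : ∀ s, D.h s (y s) (Vx s (y s)) = -u s := by
    intro s; rw [hu]; simp
  have hinv : ∀ s, D.M s s *ᵥ D.h s (y s) (Vx s (y s))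
      = (2:ℝ)⁻¹ • ((D.B s)ᵀ *ᵥ Vx s (y s)) + D.S s s *ᵥ y s + D.ρ s s := by
    intro s
    rw [LQ.h, Matrix.mulVec_mulVec,
      Matrix.mul_nonsing_inv _ (isUnit_iff_ne_zero.mpr (D.hMpos s s).det_pos.ne'),
      Matrix.one_mulVec]
  have hFr : ∀ τ s, D.F τ s (y s) (Vx s (y s)) = rt τ s := by
    intro τ s
    have h1 := hh s
    simp only [LQ.F, h1, hrt]
    simp only [Matrix.mulVec_neg, neg_dotProduct, dotProduct_neg,
      sub_dotProduct, add_dotProduct, smul_dotProduct, smul_eq_mul,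
      neg_neg]
    ring
  have hHam : ∀ s, D.Ham s (y s) (Vx s (y s)) = r s s := by
    intro s
    have e2 : (2:ℝ)⁻¹ • ((D.B s)ᵀ *ᵥ Vx s (y s))
        = -(D.M s s *ᵥ u s) - D.S s s *ᵥ y s - D.ρ s s := by
      have h3 := hinv s
      rw [hh s, Matrix.mulVec_neg] at h3
      rw [h3]; abel
    simp only [LQ.Ham, hh, e2, hr]
    simp only [sub_dotProduct, add_dotProduct, neg_dotProduct,
      dotProduct_neg, smul_dotProduct, smul_eq_mul, neg_neg]
    ring
  simp only [hHam, hFr] at hval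
  have hterm : (D.G t *ᵥ y D.T + (2:ℝ) • D.g t) ⬝ᵥ y D.T
      = (D.G t *ᵥ y D.T) ⬝ᵥ y D.T + 2 * (D.g t ⬝ᵥ y D.T) := by
    simp [add_dotProduct, smul_dotProduct, smul_eq_mul]
  -- continuity of basic data
  have hsubIcc : Set.Icc t D.T ⊆ Set.Icc 0 D.T := Set.Icc_subset_Icc ht0 le_rfl
  have hsubIoc : Set.Ioc t D.T ⊆ Set.Icc 0 D.T := fun s hs => ⟨ht0.trans hs.1.le, hs.2⟩
  have hycont : ContinuousOn y (Set.Icc t D.T) := hsol.contY t ⟨ht0, htT⟩ x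
  have hpcont : ContinuousOn (fun s => Vx s (y s)) (Set.Icc t D.T) :=
    hsol.contVx.comp (continuousOn_id.prodMk hycont) fun s hs => ⟨hsubIcc hs, Set.mem_univ _⟩
  have hMdiag : ContinuousOn (fun s => D.M s s) (Set.Icc 0 D.T) :=
    D.hM.comp (continuousOn_id.prodMk continuousOn_id) fun s hs => ⟨hs, hs⟩
  have hMinv : ContinuousOn (fun s => (D.M s s)⁻¹) (Set.Icc 0 D.T) := by
    have hdet : ContinuousOn (fun s => (D.M s s).det) (Set.Icc 0 D.T) :=
      (continuous_id.matrix_det).comp_continuousOn hMdiag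
    have hadj : ContinuousOn (fun s => (D.M s s).adjugate) (Set.Icc 0 D.T) :=
      (continuous_id.matrix_adjugate).comp_continuousOn hMdiag
    have hc : ContinuousOn (fun s => ((D.M s s).det)⁻¹ • (D.M s s).adjugate)
        (Set.Icc 0 D.T) :=
      (hdet.inv₀ fun s _ => (D.hMpos s s).det_pos.ne').smul hadj
    exact hc.congr fun s _ => by rw [Matrix.inv_def, Ring.inverse_eq_inv']
  have hSdiag : ContinuousOn (fun s => D.S s s) (Set.Icc 0 D.T) :=
    D.hS.comp (continuousOn_id.prodMk continuousOn_id) fun s hs => ⟨hs, hs⟩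
  have hρdiag : ContinuousOn (fun s => D.ρ s s) (Set.Icc 0 D.T) :=
    D.hρ.comp (continuousOn_id.prodMk continuousOn_id) fun s hs => ⟨hs, hs⟩
  -- measure and measurability
  set ν := volume.restrict (Set.Ioc t D.T) with hν
  have hyA : AEStronglyMeasurable y ν :=
    (hycont.mono Set.Ioc_subset_Icc_self).aestronglyMeasurable measurableSet_Ioc
  have hpA : AEStronglyMeasurable (fun s => Vx s (y s)) ν :=
    (hpcont.mono Set.Ioc_subset_Icc_self).aestronglyMeasurable measurableSet_Ioc
  have hMinvA : AEStronglyMeasurable (fun s => (D.M s s)⁻¹) ν :=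
    (hMinv.mono hsubIoc).aestronglyMeasurable measurableSet_Ioc
  have hSdiagA : AEStronglyMeasurable (fun s => D.S s s) ν :=
    (hSdiag.mono hsubIoc).aestronglyMeasurable measurableSet_Ioc
  have hρdiagA : AEStronglyMeasurable (fun s => D.ρ s s) ν :=
    (hρdiag.mono hsubIoc).aestronglyMeasurable measurableSet_Ioc
  have hBA : AEStronglyMeasurable D.B ν :=
    D.hB.aestronglyMeasurable.mono_measure
      (Measure.restrict_mono (Set.Ioc_subset_Ioc ht0 le_rfl) le_rfl)
  have hBTA : AEStronglyMeasurable (fun s => (D.B s)ᵀ) ν :=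
    (continuous_id.matrix_transpose).comp_aestronglyMeasurable hBA
  have huA : AEStronglyMeasurable u ν := by
    rw [hu]
    simp only [LQ.h]
    exact (VerifAux.aesm_mulVec hMinvA
      ((((VerifAux.aesm_mulVec hBTA hpA).const_smul ((2:ℝ)⁻¹)).add
        (VerifAux.aesm_mulVec hSdiagA hyA)).add hρdiagA)).neg
  -- bounds
  have hcoefs : ContinuousOn (fun pr : ℝ × ℝ =>
      ‖D.Q pr.1 pr.2‖ + ‖D.Qt pr.1 pr.2‖ + ‖D.S pr.1 pr.2‖ + ‖D.St pr.1 pr.2‖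
        + ‖D.M pr.1 pr.2‖ + ‖D.Mt pr.1 pr.2‖ + ‖D.q pr.1 pr.2‖ + ‖D.qt pr.1 pr.2‖
        + ‖D.ρ pr.1 pr.2‖ + ‖D.ρt pr.1 pr.2‖) (Set.Icc 0 D.T ×ˢ Set.Icc 0 D.T) :=
    ((((((((D.hQ.norm.add D.hQt'.norm).add D.hS.norm).add D.hSt'.norm).add
      D.hM.norm).add D.hMt'.norm).add D.hq.norm).add D.hqt'.norm).add
      D.hρ.norm).add D.hρt'.norm
  obtain ⟨K1, hK1⟩ :=
    IsCompact.exists_bound_of_continuousOn (isCompact_Icc.prod isCompact_Icc) hcoefs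
  have hKall : ∀ τ ∈ Set.Icc 0 D.T, ∀ s ∈ Set.Icc 0 D.T,
      ‖D.Q τ s‖ ≤ K1 ∧ ‖D.Qt τ s‖ ≤ K1 ∧ ‖D.S τ s‖ ≤ K1 ∧ ‖D.St τ s‖ ≤ K1
        ∧ ‖D.M τ s‖ ≤ K1 ∧ ‖D.Mt τ s‖ ≤ K1 ∧ ‖D.q τ s‖ ≤ K1 ∧ ‖D.qt τ s‖ ≤ K1
        ∧ ‖D.ρ τ s‖ ≤ K1 ∧ ‖D.ρt τ s‖ ≤ K1 := by
    intro τ hτ s hs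
    have h := hK1 (τ, s) ⟨hτ, hs⟩
    rw [Real.norm_eq_abs] at h
    have h' := (le_abs_self _).trans h
    have n1 := norm_nonneg (D.Q τ s); have n2 := norm_nonneg (D.Qt τ s)
    have n3 := norm_nonneg (D.S τ s); have n4 := norm_nonneg (D.St τ s)
    have n5 := norm_nonneg (D.M τ s); have n6 := norm_nonneg (D.Mt τ s)
    have n7 := norm_nonneg (D.q τ s); have n8 := norm_nonneg (D.qt τ s)
    have n9 := norm_nonneg (D.ρ τ s); have n10 := norm_nonneg (D.ρt τ s)
    exact ⟨by linarith, by linarith, by linarith, by linarith, by linarith,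
      by linarith, by linarith, by linarith, by linarith, by linarith⟩
  have htmem : t ∈ Set.Icc 0 D.T := ⟨ht0, htT⟩
  have hK10 : 0 ≤ K1 := le_trans (norm_nonneg _) (hKall t htmem t htmem).1
  obtain ⟨K2, hK2⟩ := IsCompact.exists_bound_of_continuousOn isCompact_Icc hycont
  have hK20 : 0 ≤ K2 := le_trans (norm_nonneg _) (hK2 t ⟨le_rfl, htT⟩)
  obtain ⟨K3, hK3⟩ := IsCompact.exists_bound_of_continuousOn isCompact_Icc hMinv
  have hK30 : 0 ≤ K3 := le_trans (norm_nonneg _) (hK3 t htmem)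
  obtain ⟨K4, hK4⟩ := IsCompact.exists_bound_of_continuousOn isCompact_Icc hpcont
  have hK40 : 0 ≤ K4 := le_trans (norm_nonneg _) (hK4 t ⟨le_rfl, htT⟩)
  have hub : ∀ s ∈ Set.Icc t D.T,
      ‖u s‖ ≤ K3 * ((n:ℝ) * K4) * ‖D.B s‖ + K3 * (K1 * K2 + K1) := by
    intro s hs
    have hs0 : s ∈ Set.Icc 0 D.T := hsubIcc hs
    have h1 : ‖u s‖ = ‖(D.M s s)⁻¹ *ᵥ ((2:ℝ)⁻¹ • ((D.B s)ᵀ *ᵥ Vx s (y s))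
        + D.S s s *ᵥ y s + D.ρ s s)‖ := by
      rw [hu]
      simp only [LQ.h]
      rw [norm_neg]
    rw [h1]
    have h2 := Matrix.linfty_opNorm_mulVec ((D.M s s)⁻¹)
      ((2:ℝ)⁻¹ • ((D.B s)ᵀ *ᵥ Vx s (y s)) + D.S s s *ᵥ y s + D.ρ s s)
    have hc1 : ‖(2:ℝ)⁻¹ • ((D.B s)ᵀ *ᵥ Vx s (y s))‖ ≤ (n:ℝ) * K4 * ‖D.B s‖ := by
      rw [norm_smul]
      have ht1 := VerifAux.norm_transpose_mulVec_le (D.B s) (Vx s (y s))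
      have ht2 := hK4 s hs
      have ht3 : (0:ℝ) ≤ ‖D.B s‖ := norm_nonneg _
      have ht4 : (0:ℝ) ≤ (n:ℝ) := Nat.cast_nonneg n
      have ht5 : ‖((2:ℝ)⁻¹)‖ = 2⁻¹ := by rw [Real.norm_eq_abs]; norm_num
      rw [ht5]
      nlinarith [norm_nonneg ((D.B s)ᵀ *ᵥ Vx s (y s)), norm_nonneg (Vx s (y s)),
        mul_le_mul_of_nonneg_left ht2 (mul_nonneg ht4 ht3)]
    have hc2 : ‖D.S s s *ᵥ y s‖ ≤ K1 * K2 :=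
      (Matrix.linfty_opNorm_mulVec _ _).trans
        (mul_le_mul (hKall s hs0 s hs0).2.2.1 (hK2 s hs) (norm_nonneg _) hK10)
    have hc3 : ‖D.ρ s s‖ ≤ K1 := (hKall s hs0 s hs0).2.2.2.2.2.2.2.2.1
    have hz : ‖(2:ℝ)⁻¹ • ((D.B s)ᵀ *ᵥ Vx s (y s)) + D.S s s *ᵥ y s + D.ρ s s‖
        ≤ (n:ℝ) * K4 * ‖D.B s‖ + (K1 * K2 + K1) := by
      have ha := norm_add_le ((2:ℝ)⁻¹ • ((D.B s)ᵀ *ᵥ Vx s (y s)) + D.S s s *ᵥ y s) (D.ρ s s)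
      have hb := norm_add_le ((2:ℝ)⁻¹ • ((D.B s)ᵀ *ᵥ Vx s (y s))) (D.S s s *ᵥ y s)
      linarith
    have hm3 := hK3 s hs0
    calc ‖(D.M s s)⁻¹ *ᵥ ((2:ℝ)⁻¹ • ((D.B s)ᵀ *ᵥ Vx s (y s)) + D.S s s *ᵥ y s + D.ρ s s)‖
        ≤ ‖(D.M s s)⁻¹‖ * ‖(2:ℝ)⁻¹ • ((D.B s)ᵀ *ᵥ Vx s (y s)) + D.S s s *ᵥ y s + D.ρ s s‖ :=
          h2
      _ ≤ K3 * ((n:ℝ) * K4 * ‖D.B s‖ + (K1 * K2 + K1)) :=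
          mul_le_mul hm3 hz (norm_nonneg _) hK30
      _ = K3 * ((n:ℝ) * K4) * ‖D.B s‖ + K3 * (K1 * K2 + K1) := by ring
  have hBmem : @MemLp _ _ _ _ PseudoMetricSpace.toUniformSpace.toTopologicalSpace D.B 2 ν :=
    D.hB.mono_measure (Measure.restrict_mono (Set.Ioc_subset_Ioc ht0 le_rfl) le_rfl)
  have hgmem : MemLp (fun s => K3 * ((n:ℝ) * K4) * ‖D.B s‖ + K3 * (K1 * K2 + K1)) 2 ν := by
    have h2 := (hBmem.norm.const_mul (K3 * ((n:ℝ) * K4))).add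
      (memLp_const (μ := ν) (p := 2) (K3 * (K1 * K2 + K1)))
    exact h2
  have humem : MemLp u 2 ν := by
    refine hgmem.of_le huA ?_
    filter_upwards [ae_restrict_mem measurableSet_Ioc] with s hs
    have h1 := hub s (Set.Ioc_subset_Icc_self hs)
    rw [Real.norm_eq_abs (K3 * ((n:ℝ) * K4) * ‖D.B s‖ + K3 * (K1 * K2 + K1))]
    exact h1.trans (le_abs_self _)
  have hquad : Integrable (fun s => (1 + ‖u s‖) ^ 2) ν := by
    have h1 : MemLp (fun s => 1 + ‖u s‖) 2 ν := (memLp_const (1:ℝ)).add humem.norm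
    exact h1.integrable_sq
  set C := 8 * ((n:ℝ) + (m:ℝ)) * (K1 + 1) * (K2 + 1) ^ 2 with hC
  have hCint : Integrable (fun s => C * (1 + ‖u s‖) ^ 2) ν := hquad.const_mul C
  have hrb : ∀ τ ∈ Set.Icc 0 D.T, ∀ s ∈ Set.Icc t D.T,
      |r τ s| ≤ C * (1 + ‖u s‖) ^ 2 := by
    intro τ hτ s hs
    have hs0 := hsubIcc hs
    obtain ⟨c1, c2, c3, c4, c5, c6, c7, c8, c9, c10⟩ := hKall τ hτ s hs0
    simp only [hr]
    have := VerifAux.quad_bound hK10 hK20 c1 c3 c5 c7 c9 (hK2 s hs) (v := u s)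
    calc |(D.Q τ s *ᵥ y s) ⬝ᵥ y s + 2 * ((D.S τ s *ᵥ y s) ⬝ᵥ u s) + (D.M τ s *ᵥ u s) ⬝ᵥ u s
        + 2 * (D.q τ s ⬝ᵥ y s) + 2 * (D.ρ τ s ⬝ᵥ u s)|
        ≤ 8 * ((n:ℝ) + (m:ℝ)) * (K1 + 1) * (K2 + 1) ^ 2 * (1 + ‖u s‖) ^ 2 := this
      _ = C * (1 + ‖u s‖) ^ 2 := by rw [hC]
  have hrtb : ∀ τ ∈ Set.Icc 0 D.T, ∀ s ∈ Set.Icc t D.T,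
      |rt τ s| ≤ C * (1 + ‖u s‖) ^ 2 := by
    intro τ hτ s hs
    have hs0 := hsubIcc hs
    obtain ⟨c1, c2, c3, c4, c5, c6, c7, c8, c9, c10⟩ := hKall τ hτ s hs0
    simp only [hrt]
    have := VerifAux.quad_bound hK10 hK20 c2 c4 c6 c8 c10 (hK2 s hs) (v := u s)
    calc |(D.Qt τ s *ᵥ y s) ⬝ᵥ y s + 2 * ((D.St τ s *ᵥ y s) ⬝ᵥ u s) + (D.Mt τ s *ᵥ u s) ⬝ᵥ u s
        + 2 * (D.qt τ s ⬝ᵥ y s) + 2 * (D.ρt τ s ⬝ᵥ u s)|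
        ≤ 8 * ((n:ℝ) + (m:ℝ)) * (K1 + 1) * (K2 + 1) ^ 2 * (1 + ‖u s‖) ^ 2 := this
      _ = C * (1 + ‖u s‖) ^ 2 := by rw [hC]
  -- measurability of the integrands
  have hrowA : AEStronglyMeasurable (fun s => r t s) ν := by
    simp only [hr]
    have a1 : AEStronglyMeasurable (fun s => D.Q t s) ν :=
      VerifAux.aesm_fix_fst ht0 htmem D.hQ
    have a2 : AEStronglyMeasurable (fun s => D.S t s) ν :=
      VerifAux.aesm_fix_fst ht0 htmem D.hS
    have a3 : AEStronglyMeasurable (fun s => D.M t s) ν :=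
      VerifAux.aesm_fix_fst ht0 htmem D.hM
    have a4 : AEStronglyMeasurable (fun s => D.q t s) ν :=
      VerifAux.aesm_fix_fst ht0 htmem D.hq
    have a5 : AEStronglyMeasurable (fun s => D.ρ t s) ν :=
      VerifAux.aesm_fix_fst ht0 htmem D.hρ
    exact ((((VerifAux.aesm_dot (VerifAux.aesm_mulVec a1 hyA) hyA).add
      (aestronglyMeasurable_const.mul
        (VerifAux.aesm_dot (VerifAux.aesm_mulVec a2 hyA) huA))).add
      (VerifAux.aesm_dot (VerifAux.aesm_mulVec a3 huA) huA)).add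
      (aestronglyMeasurable_const.mul (VerifAux.aesm_dot a4 hyA))).add
      (aestronglyMeasurable_const.mul (VerifAux.aesm_dot a5 huA))
  have hdiagA : AEStronglyMeasurable (fun s => r s s) ν := by
    simp only [hr]
    have a1 : AEStronglyMeasurable (fun s => D.Q s s) ν := VerifAux.aesm_diag ht0 D.hQ
    have a2 : AEStronglyMeasurable (fun s => D.S s s) ν := VerifAux.aesm_diag ht0 D.hS
    have a3 : AEStronglyMeasurable (fun s => D.M s s) ν := VerifAux.aesm_diag ht0 D.hM
    have a4 : AEStronglyMeasurable (fun s => D.q s s) ν := VerifAux.aesm_diag ht0 D.hq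
    have a5 : AEStronglyMeasurable (fun s => D.ρ s s) ν := VerifAux.aesm_diag ht0 D.hρ
    exact ((((VerifAux.aesm_dot (VerifAux.aesm_mulVec a1 hyA) hyA).add
      (aestronglyMeasurable_const.mul
        (VerifAux.aesm_dot (VerifAux.aesm_mulVec a2 hyA) huA))).add
      (VerifAux.aesm_dot (VerifAux.aesm_mulVec a3 huA) huA)).add
      (aestronglyMeasurable_const.mul (VerifAux.aesm_dot a4 hyA))).add
      (aestronglyMeasurable_const.mul (VerifAux.aesm_dot a5 huA))
  have hrtA : AEStronglyMeasurable (fun pr : ℝ × ℝ => rt pr.1 pr.2) (ν.prod ν) := by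
    simp only [hrt]
    have hprodset : Set.Ioc t D.T ×ˢ Set.Ioc t D.T
        ⊆ Set.Icc 0 D.T ×ˢ Set.Icc 0 D.T := fun pr hpr => ⟨hsubIoc hpr.1, hsubIoc hpr.2⟩
    have hmm : ν.prod ν = (volume.prod volume).restrict (Set.Ioc t D.T ×ˢ Set.Ioc t D.T) :=
      Measure.prod_restrict _ _
    have coefA : ∀ {k l : ℕ} (f : ℝ → ℝ → Matrix (Fin k) (Fin l) ℝ),
        ContinuousOn (fun pr : ℝ × ℝ => f pr.1 pr.2) (Set.Icc 0 D.T ×ˢ Set.Icc 0 D.T) →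
        AEStronglyMeasurable (fun pr : ℝ × ℝ => f pr.1 pr.2) (ν.prod ν) := by
      intro k l f hf
      rw [hmm]
      exact (hf.mono hprodset).aestronglyMeasurable
        (measurableSet_Ioc.prod measurableSet_Ioc)
    have coefV : ∀ {k : ℕ} (f : ℝ → ℝ → Fin k → ℝ),
        ContinuousOn (fun pr : ℝ × ℝ => f pr.1 pr.2) (Set.Icc 0 D.T ×ˢ Set.Icc 0 D.T) →
        AEStronglyMeasurable (fun pr : ℝ × ℝ => f pr.1 pr.2) (ν.prod ν) := by
      intro k f hf
      rw [hmm]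
      exact (hf.mono hprodset).aestronglyMeasurable
        (measurableSet_Ioc.prod measurableSet_Ioc)
    have a1 := coefA D.Qt D.hQt'
    have a2 := coefA D.St D.hSt'
    have a3 := coefA D.Mt D.hMt'
    have a4 := coefV D.qt D.hqt'
    have a5 := coefV D.ρt D.hρt'
    have hy2 : AEStronglyMeasurable (fun pr : ℝ × ℝ => y pr.2) (ν.prod ν) := hyA.comp_snd
    have hu2 : AEStronglyMeasurable (fun pr : ℝ × ℝ => u pr.2) (ν.prod ν) := huA.comp_snd
    exact ((((VerifAux.aesm_dot (VerifAux.aesm_mulVec a1 hy2) hy2).add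
      (aestronglyMeasurable_const.mul
        (VerifAux.aesm_dot (VerifAux.aesm_mulVec a2 hy2) hu2))).add
      (VerifAux.aesm_dot (VerifAux.aesm_mulVec a3 hu2) hu2)).add
      (aestronglyMeasurable_const.mul (VerifAux.aesm_dot a4 hy2))).add
      (aestronglyMeasurable_const.mul (VerifAux.aesm_dot a5 hu2))
  -- interval integrability
  have hrowInt : IntervalIntegrable (fun s => r t s) volume t D.T := by
    rw [intervalIntegrable_iff_integrableOn_Ioc_of_le htT]
    refine Integrable.mono' hCint hrowA ?_
    filter_upwards [ae_restrict_mem measurableSet_Ioc] with s hs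
    rw [Real.norm_eq_abs]
    exact hrb t htmem s (Set.Ioc_subset_Icc_self hs)
  have hdiagInt : IntervalIntegrable (fun s => r s s) volume t D.T := by
    rw [intervalIntegrable_iff_integrableOn_Ioc_of_le htT]
    refine Integrable.mono' hCint hdiagA ?_
    filter_upwards [ae_restrict_mem measurableSet_Ioc] with s hs
    rw [Real.norm_eq_abs]
    exact hrb s (hsubIoc hs) s (Set.Ioc_subset_Icc_self hs)
  -- fundamental theorem of calculus in the first variable
  have hFTC : ∀ s ∈ Set.Icc t D.T, (∫ τ in t..s, rt τ s) = r s s - r t s := by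
    intro s hs
    have hts : t ≤ s := hs.1
    have hs0 : s ∈ Set.Icc 0 D.T := hsubIcc hs
    have hderiv : ∀ τ ∈ Set.uIcc t s, HasDerivAt (fun τ => r τ s) (rt τ s) τ := by
      intro τ hτ
      rw [Set.uIcc_of_le hts] at hτ
      have hτ0 : τ ∈ Set.Icc 0 D.T := ⟨ht0.trans hτ.1, hτ.2.trans hs.2⟩
      have h1 := VerifAux.hasDerivAt_mvd (D.hQt s τ hτ0) (y s) (y s)
      have h2 := (VerifAux.hasDerivAt_mvd (D.hSt s τ hτ0) (y s) (u s)).const_mul (2:ℝ)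
      have h3 := VerifAux.hasDerivAt_mvd (D.hMt s τ hτ0) (u s) (u s)
      have h4 := (VerifAux.hasDerivAt_dot (D.hqt s τ hτ0) (y s)).const_mul (2:ℝ)
      have h5 := (VerifAux.hasDerivAt_dot (D.hρt s τ hτ0) (u s)).const_mul (2:ℝ)
      simp only [hr, hrt]
      exact (((h1.add h2).add h3).add h4).add h5
    have hint : IntervalIntegrable (fun τ => rt τ s) volume t s := by
      apply ContinuousOn.intervalIntegrable
      rw [Set.uIcc_of_le hts]
      have hsub2 : Set.Icc t s ⊆ Set.Icc 0 D.T := fun τ hτ =>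
        ⟨ht0.trans hτ.1, hτ.2.trans hs.2⟩
      have c1 : ContinuousOn (fun τ => D.Qt τ s) (Set.Icc t s) :=
        D.hQt'.comp (continuousOn_id.prodMk continuousOn_const) fun τ hτ => ⟨hsub2 hτ, hs0⟩
      have c2 : ContinuousOn (fun τ => D.St τ s) (Set.Icc t s) :=
        D.hSt'.comp (continuousOn_id.prodMk continuousOn_const) fun τ hτ => ⟨hsub2 hτ, hs0⟩
      have c3 : ContinuousOn (fun τ => D.Mt τ s) (Set.Icc t s) :=
        D.hMt'.comp (continuousOn_id.prodMk continuousOn_const) fun τ hτ => ⟨hsub2 hτ, hs0⟩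
      have c4 : ContinuousOn (fun τ => D.qt τ s) (Set.Icc t s) :=
        D.hqt'.comp (continuousOn_id.prodMk continuousOn_const) fun τ hτ => ⟨hsub2 hτ, hs0⟩
      have c5 : ContinuousOn (fun τ => D.ρt τ s) (Set.Icc t s) :=
        D.hρt'.comp (continuousOn_id.prodMk continuousOn_const) fun τ hτ => ⟨hsub2 hτ, hs0⟩
      simp only [hrt]
      exact ((((VerifAux.contOn_dot (VerifAux.contOn_mulVec c1 continuousOn_const)
        continuousOn_const).add (continuousOn_const.mul (VerifAux.contOn_dot
          (VerifAux.contOn_mulVec c2 continuousOn_const) continuousOn_const))).add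
        (VerifAux.contOn_dot (VerifAux.contOn_mulVec c3 continuousOn_const)
          continuousOn_const)).add (continuousOn_const.mul
        (VerifAux.contOn_dot c4 continuousOn_const))).add (continuousOn_const.mul
        (VerifAux.contOn_dot c5 continuousOn_const))
    exact intervalIntegral.integral_eq_sub_of_hasDerivAt hderiv hint
  -- cost-side manipulation
  have hinnerInt : IntervalIntegrable (fun s => ∫ τ in t..s, rt τ s) volume t D.T := by
    rw [intervalIntegrable_iff_integrableOn_Ioc_of_le htT]
    have hdiff : IntegrableOn (fun s => r s s - r t s) (Set.Ioc t D.T) volume := by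
      have i1 : IntegrableOn (fun s => r s s) (Set.Ioc t D.T) volume := by
        rw [← intervalIntegrable_iff_integrableOn_Ioc_of_le htT]; exact hdiagInt
      have i2 : IntegrableOn (fun s => r t s) (Set.Ioc t D.T) volume := by
        rw [← intervalIntegrable_iff_integrableOn_Ioc_of_le htT]; exact hrowInt
      exact i1.sub i2
    refine hdiff.congr ?_
    filter_upwards [ae_restrict_mem measurableSet_Ioc] with s hs
    exact (hFTC s (Set.Ioc_subset_Icc_self hs)).symm
  have hcost1 : (∫ s in t..D.T, r t s)
      = (∫ s in t..D.T, r s s) - ∫ s in t..D.T, (∫ τ in t..s, rt τ s) := by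
    have heq : Set.EqOn (fun s => r t s)
        (fun s => r s s - ∫ τ in t..s, rt τ s) (Set.uIcc t D.T) := by
      intro s hs
      rw [Set.uIcc_of_le htT] at hs
      simp only
      rw [hFTC s hs]
      ring
    rw [intervalIntegral.integral_congr heq]
    exact intervalIntegral.integral_sub hdiagInt hinnerInt
  -- Fubini on the triangle
  obtain ⟨hwInt, hswap⟩ := VerifAux.triangle_swap htT rt hrtA
    (fun s => C * (1 + ‖u s‖) ^ 2) hCint
    (fun τ hτ s hs => hrtb τ (hsubIoc hτ) s (Set.Ioc_subset_Icc_self hs))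
  -- value-side manipulation
  have hVsplit : (∫ τ in t..D.T, (r τ τ - ∫ s in τ..D.T, rt τ s))
      = (∫ τ in t..D.T, r τ τ) - ∫ τ in t..D.T, (∫ s in τ..D.T, rt τ s) :=
    intervalIntegral.integral_sub hdiagInt hwInt
  -- assemble
  have hcosteq : D.cost t u y
      = (∫ s in t..D.T, r t s) + (D.G t *ᵥ y D.T) ⬝ᵥ y D.T + 2 * (D.g t ⬝ᵥ y D.T) := by
    rw [LQ.cost]
  rw [hval, hcosteq, hcost1, hterm, hVsplit, hswap]
  ring


end
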